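/- arXiv:1908.03045 — 3 statements merged into one kernel-verified Lean document; each statement's English description precedes it below -/
import Mathlib

section
/- Let 𝔽 be a field, A ⊆ 𝔽 a finite set, and 𝒱 ⊆ A^n a finite point set. Then the set of standard monomials Sm(I(𝒱)) is the same for every lexicographic term order if and only if Sm(I(𝒱)) is the same for every term order. -/
open MvPolynomial

/-- Monomials of `𝔽[x_1,…,x_n]` identified with their exponent vectors. -/
abbrev Mon (n : ℕ) := Fin n →₀ ℕ

/-- A linear order on monomials is a term order if `1` (i.e. the zero exponent
vector) is minimal and the order is compatible with multiplication by monomials. -/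
def IsTermOrder {n : ℕ} (lin : LinearOrder (Mon n)) : Prop :=
  (∀ u : Mon n, lin.le 0 u) ∧
    ∀ u v w : Mon n, lin.le u v → lin.le (u + w) (v + w)

/-- The strict lexicographic comparison of exponent vectors induced by the variable
ordering `x_{σ 0} ≻ x_{σ 1} ≻ ⋯ ≻ x_{σ (n-1)}`. -/
def lexLt {n : ℕ} (σ : Equiv.Perm (Fin n)) (u v : Mon n) : Prop :=
  ∃ j : Fin n, u (σ j) < v (σ j) ∧ ∀ i : Fin n, i < j → u (σ i) = v (σ i)

/-- `lin` is the lexicographic term order induced by the variable ordering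
`x_{σ 0} ≻ x_{σ 1} ≻ ⋯ ≻ x_{σ (n-1)}`. -/
def IsLexOrder {n : ℕ} (σ : Equiv.Perm (Fin n)) (lin : LinearOrder (Mon n)) : Prop :=
  ∀ u v : Mon n, lin.lt u v ↔ lexLt σ u v

/-- `m` is the leading monomial of `f` with respect to the monomial order `lin`. -/
def IsLeadMon {n : ℕ} {F : Type*} [CommSemiring F] (lin : LinearOrder (Mon n))
    (f : MvPolynomial (Fin n) F) (m : Mon n) : Prop :=
  m ∈ f.support ∧ ∀ m' ∈ f.support, lin.le m' m

/-- The set of standard monomials of an ideal `I` with respect to the monomial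
order `lin`: monomials that are not the leading monomial of any nonzero `f ∈ I`. -/
def stdMon {n : ℕ} {F : Type*} [CommSemiring F] (lin : LinearOrder (Mon n))
    (I : Ideal (MvPolynomial (Fin n) F)) : Set (Mon n) :=
  { m | ¬ ∃ f ∈ I, f ≠ 0 ∧ IsLeadMon lin f m }

/-- The vanishing ideal of a point set `V ⊆ F^n`. -/
def vanishIdeal {n : ℕ} {F : Type*} [CommRing F] (V : Set (Fin n → F)) :
    Ideal (MvPolynomial (Fin n) F) where
  carrier := { f | ∀ v ∈ V, MvPolynomial.eval v f = 0 }
  add_mem' := by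
    intro a b ha hb v hv
    simp [map_add, ha v hv, hb v hv]
  zero_mem' := by intro v hv; simp
  smul_mem' := by
    intro c f hf v hv
    simp [smul_eq_mul, hf v hv]

/-- A finite point set (in `{0,…,k-1}^n`, over any field) is extremal if its vanishing
ideal has the same standard monomials for every lexicographic term order. -/
def IsExtremal {n : ℕ} {F : Type*} [CommRing F] (V : Set (Fin n → F)) : Prop :=
  ∀ (σ₁ σ₂ : Equiv.Perm (Fin n)) (lin₁ lin₂ : LinearOrder (Mon n)),
    IsLexOrder σ₁ lin₁ → IsLexOrder σ₂ lin₂ →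
      stdMon lin₁ (vanishIdeal V) = stdMon lin₂ (vanishIdeal V)

/-- Embedding of a point of `{0,…,k-1}^n` into `F^n`. -/
def toField {n k : ℕ} (F : Type*) [Field F] (w : Fin n → Fin k) : Fin n → F :=
  fun i => ((w i : ℕ) : F)

/-- Identification of a point of `{0,…,k-1}^n` with an exponent vector in `ℕ^n`. -/
noncomputable def toExp {n k : ℕ} (w : Fin n → Fin k) : Mon n :=
  Finsupp.equivFunOnFinite.symm fun i => (w i : ℕ)

/-- The downshift `D_i(V)` of `V ⊆ {0,…,k-1}^n` at coordinate `i`: its `i`-section at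
each choice of the other coordinates is `{0,1,…,m-1}` where `m` is the size of the
corresponding `i`-section of `V`. -/
def downshift {n k : ℕ} (V : Finset (Fin n → Fin k)) (i : Fin n) :
    Finset (Fin n → Fin k) :=
  Finset.univ.filter fun w =>
    (w i : ℕ) < (Finset.univ.filter fun α : Fin k => Function.update w i α ∈ V).card

/-- The iterated downshift `D_{σ(n-1)}(D_{σ(n-2)}(⋯(D_{σ 0}(V))))`,
i.e. downshifts are applied at coordinates `σ 0, σ 1, …, σ (n-1)` in this order. -/
def iterDownshift {n k : ℕ} (σ : Equiv.Perm (Fin n)) (V : Finset (Fin n → Fin k)) :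
    Finset (Fin n → Fin k) :=
  (List.ofFn fun j : Fin n => σ j).foldl downshift V

/-- A polynomial is degree dominated (with dominating term `x^w`) if it equals
`x^w + Σ αᵢ x^{vᵢ}` where each `x^{vᵢ}` divides `x^w`. -/
def IsDegDominated {n : ℕ} {F : Type*} [CommSemiring F]
    (f : MvPolynomial (Fin n) F) : Prop :=
  ∃ w : Mon n, MvPolynomial.coeff w f = 1 ∧ ∀ v ∈ f.support, v ≤ w

/-- `G` is a Gröbner basis of `I` with respect to the monomial order `lin`:
`G ⊆ I` and for every nonzero `f ∈ I` some `g ∈ G` has leading monomial dividing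
the leading monomial of `f` (divisibility of monomials being `≤` of exponents). -/
def IsGroebner {n : ℕ} {F : Type*} [CommSemiring F] (lin : LinearOrder (Mon n))
    (G : Finset (MvPolynomial (Fin n) F)) (I : Ideal (MvPolynomial (Fin n) F)) : Prop :=
  (∀ g ∈ G, g ∈ I) ∧
    ∀ f ∈ I, f ≠ 0 → ∀ m : Mon n, IsLeadMon lin f m →
      ∃ g ∈ G, ∃ mg : Mon n, IsLeadMon lin g mg ∧ mg ≤ m

/-- `G` is a universal Gröbner basis of `I` if it is a Gröbner basis for every term order. -/
def IsUnivGroebner {n : ℕ} {F : Type*} [CommSemiring F]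
    (G : Finset (MvPolynomial (Fin n) F)) (I : Ideal (MvPolynomial (Fin n) F)) : Prop :=
  ∀ lin : LinearOrder (Mon n), IsTermOrder lin → IsGroebner lin G I

/-- A term order is an elimination order with respect to `x_i` if `x_i` is greater
than every monomial not involving `x_i`. -/
def IsElimOrder {n : ℕ} (lin : LinearOrder (Mon n)) (i : Fin n) : Prop :=
  IsTermOrder lin ∧ ∀ m : Mon n, m i = 0 → lin.lt m (Finsupp.single i 1)

/-- A set system `𝓕` shatters `S` if every subset of `S` is the intersection of `S`
with a member of `𝓕`. -/
def Shatters {n : ℕ} (𝓕 : Finset (Finset (Fin n))) (S : Finset (Fin n)) : Prop :=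
  ∀ T ⊆ S, ∃ Fm ∈ 𝓕, Fm ∩ S = T

open scoped Classical in
/-- The family `Sh(𝓕)` of sets shattered by `𝓕`. -/
noncomputable def shatteredFamily {n : ℕ} (𝓕 : Finset (Finset (Fin n))) :
    Finset (Finset (Fin n)) :=
  Finset.univ.filter fun S => Shatters 𝓕 S

/-- A set system is shattering-extremal if it shatters exactly `|𝓕|` sets. -/
def IsSExtremal {n : ℕ} (𝓕 : Finset (Finset (Fin n))) : Prop :=
  (shatteredFamily 𝓕).card = 𝓕.card

/-- The characteristic vector of a set, as a point of `F^n`. -/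
def charVec {n : ℕ} (F : Type*) [Field F] (Fm : Finset (Fin n)) : Fin n → F :=
  fun i => if i ∈ Fm then 1 else 0

/-- The squarefree monomial `∏_{i ∈ S} x_i` associated to a set `S ⊆ [n]`,
as an exponent vector. -/
noncomputable def setMon {n : ℕ} (S : Finset (Fin n)) : Mon n :=
  Finsupp.equivFunOnFinite.symm fun i => if i ∈ S then 1 else 0

/-- The polynomial `f_{S,H} = (∏_{i∈H} x_i) ⬝ ∏_{i∈S∖H} (x_i - 1)`. -/
noncomputable def fSH {n : ℕ} (F : Type*) [Field F] (S H : Finset (Fin n)) :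
    MvPolynomial (Fin n) F :=
  (∏ i ∈ H, X i) * ∏ i ∈ S \ H, (X i - 1)

/-- The downshift `D_i(𝓕)` of a set system. -/
def dshiftSet {n : ℕ} (𝓕 : Finset (Finset (Fin n))) (i : Fin n) :
    Finset (Finset (Fin n)) :=
  𝓕.image (fun Fm => Fm.erase i) ∪ 𝓕.filter fun Fm => i ∈ Fm ∧ Fm.erase i ∈ 𝓕

/-- The iterated downshift `D_{σ(n-1)}(⋯(D_{σ 0}(𝓕)))` of a set system:
downshifts are applied at `σ 0, σ 1, …, σ (n-1)` in this order. -/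
def iterDshiftSet {n : ℕ} (σ : Equiv.Perm (Fin n)) (𝓕 : Finset (Finset (Fin n))) :
    Finset (Finset (Fin n)) :=
  (List.ofFn fun j : Fin n => σ j).foldl dshiftSet 𝓕

/-- Restriction of an exponent vector in `ℕ^{n+1}` to its first `n` coordinates. -/
noncomputable def restrictMon {n : ℕ} (w : Mon (n + 1)) : Mon n :=
  Finsupp.equivFunOnFinite.symm fun i => w i.castSucc

/-!
Let `D` be the common set of standard monomials of the lex orders. Division by the nonzero
elements of `I` gives, for every term order, a normal form of `x^w` supported on its standard
monomials. For `w ∉ D` the lex normal forms of `x^w` are all supported on `D`, so they coincide;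
thus one `r` lies lex-below `x^w` for every ordering of the variables, which forces every monomial
of `r` to divide `x^w`. Hence `x^w - r ∈ I` has leading monomial `x^w` for every term order, so
`Sm(I) ⊆ D` for every term order. Equality follows because the standard monomial sets of two term
orders are never strictly nested: the normal form `r` of `x^w` for the smaller set would make
`x^w - r` a nonzero element of `I` supported on the larger one.
-/

variable {n : ℕ}

section Lex

theorem lexLt_iff_toLex_lt (σ : Equiv.Perm (Fin n)) (u v : Mon n) :
    lexLt σ u v ↔ toLex (⇑u ∘ σ) < toLex (⇑v ∘ σ) :=
  exists_congr fun _ => and_comm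

noncomputable abbrev lexOrder (σ : Equiv.Perm (Fin n)) : LinearOrder (Mon n) :=
  LinearOrder.lift' (fun u : Mon n => toLex (⇑u ∘ σ)) fun u v huv => by
    ext i
    simpa using congrFun (toLex_inj.mp huv) (σ.symm i)

theorem isLexOrder_lexOrder (σ : Equiv.Perm (Fin n)) : IsLexOrder σ (lexOrder σ) :=
  fun u v => (lexLt_iff_toLex_lt σ u v).symm

theorem IsLexOrder.isTermOrder {σ : Equiv.Perm (Fin n)} {lin : LinearOrder (Mon n)}
    (h : IsLexOrder σ lin) : IsTermOrder lin := by
  have hle (u v : Mon n) : lin.le u v ↔ toLex (⇑u ∘ σ) ≤ toLex (⇑v ∘ σ) :=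
    (@not_lt _ lin v u).symm.trans (((h v u).trans (lexLt_iff_toLex_lt σ v u)).not.trans not_lt)
  refine ⟨fun u => (hle 0 u).2 (Pi.toLex_monotone fun _ => Nat.zero_le _),
    fun u v w huv => (hle _ _).2 ?_⟩
  exact add_le_add_left ((hle u v).1 huv) (toLex (⇑w ∘ σ))

theorem le_of_forall_lexLt {u v : Mon n} (h : ∀ σ : Equiv.Perm (Fin n), lexLt σ u v) :
    u ≤ v := by
  intro i
  -- compare in an ordering of the variables where `x_i` comes first
  set z : Fin n := ⟨0, i.pos⟩
  obtain ⟨j, hlt, heq⟩ := h (Equiv.swap z i)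
  rcases lt_or_ge z j with hzj | hjz
  · simpa using (heq z hzj).le
  · obtain rfl : j = z := le_antisymm hjz (Fin.mk_le_mk.2 (Nat.zero_le _))
    simpa using hlt.le

end Lex

/-- A copy of `Mon n` whose only order is `lin` (`Mon n` itself carries the divisibility order). -/
def WithTermOrder (_lin : LinearOrder (Mon n)) : Type := Mon n

noncomputable instance (lin : LinearOrder (Mon n)) : AddCommMonoid (WithTermOrder lin) :=
  inferInstanceAs (AddCommMonoid (Mon n))

instance (lin : LinearOrder (Mon n)) : LinearOrder (WithTermOrder lin) := lin

theorem MvPolynomial.coe_support_sub_subset {R σ : Type*} [CommRing R]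
    {p q : MvPolynomial σ R} {s : Set (σ →₀ ℕ)} (hp : (p.support : Set (σ →₀ ℕ)) ⊆ s)
    (hq : (q.support : Set (σ →₀ ℕ)) ⊆ s) : ((p - q).support : Set (σ →₀ ℕ)) ⊆ s := by
  classical
  intro d hd
  rcases Finset.mem_union.mp (support_sub σ p q hd) with h | h
  exacts [hp h, hq h]

theorem eq_zero_of_support_subset_stdMon {F : Type*} [CommSemiring F]
    (lin : LinearOrder (Mon n)) {I : Ideal (MvPolynomial (Fin n) F)}
    {f : MvPolynomial (Fin n) F} (hf : f ∈ I)
    (hsupp : (f.support : Set (Mon n)) ⊆ stdMon lin I) : f = 0 := by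
  by_contra hf0
  obtain ⟨d, hd, hmax⟩ :=
    @Finset.exists_max_image _ _ lin f.support id (support_nonempty.mpr hf0)
  exact hsupp hd ⟨f, hf, hf0, hd, hmax⟩

namespace IsTermOrder

variable {lin : LinearOrder (Mon n)}

theorem le_of_le (h : IsTermOrder lin) {u v : Mon n} (huv : u ≤ v) : lin.le u v := by
  obtain ⟨w, rfl⟩ := exists_add_of_le huv
  simpa [add_comm] using h.2 0 w u (h.1 w)

theorem wellFounded (h : IsTermOrder lin) : WellFounded lin.lt := by
  rw [RelEmbedding.wellFounded_iff_isEmpty]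
  refine ⟨fun e => ?_⟩
  obtain ⟨i, j, hij, hle⟩ := wellQuasiOrdered_le (α := Mon n) (fun k => e k)
  exact (@not_lt _ lin _ _).2 (h.le_of_le hle) (e.map_rel_iff.2 hij)

noncomputable def toMonomialOrder (h : IsTermOrder lin) : MonomialOrder (Fin n) where
  syn := WithTermOrder lin
  isOrderedAddMonoid_syn := { add_le_add_left := fun u v huv w => h.2 u v w huv }
  toSyn := { Equiv.refl _ with map_add' := fun _ _ => rfl }
  toSyn_monotone := fun _ _ => h.le_of_le
  wellFoundedLT_syn := ⟨by exact h.wellFounded⟩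

variable {F : Type*} [Field F]

theorem degree_eq_of_isLeadMon (h : IsTermOrder lin) {f : MvPolynomial (Fin n) F} {d : Mon n}
    (hf : f ≠ 0) (hd : IsLeadMon lin f d) : h.toMonomialOrder.degree f = d :=
  lin.le_antisymm _ _ (hd.2 _ (h.toMonomialOrder.degree_mem_support hf))
    (h.toMonomialOrder.le_degree hd.1)

theorem exists_monomial_sub_mem (h : IsTermOrder lin) (I : Ideal (MvPolynomial (Fin n) F))
    (w : Mon n) :
    ∃ r : MvPolynomial (Fin n) F, monomial w 1 - r ∈ I ∧
      (r.support : Set (Mon n)) ⊆ stdMon lin I ∧ ∀ u ∈ r.support, lin.le u w := by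
  set m := h.toMonomialOrder
  obtain ⟨g, r, hsum, hdeg, hrem⟩ := m.div_set (B := {b | b ∈ I ∧ b ≠ 0})
    (fun b hb => (m.leadingCoeff_ne_zero_iff.mpr hb.2).isUnit) (monomial w (1 : F))
  have hw : m.toSyn (m.degree (monomial w (1 : F))) ≤ m.toSyn w := m.degree_monomial_le 1
  have hsub : monomial w 1 - r =
      Finsupp.linearCombination _ (fun b : {b | b ∈ I ∧ b ≠ 0} => b.1) g :=
    sub_eq_of_eq_add hsum
  refine ⟨r, ?_, ?_, fun u hu => ?_⟩
  · rw [hsub, Finsupp.linearCombination_apply]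
    exact Ideal.sum_mem _ fun b _ => I.mul_mem_left _ b.2.1
  · rintro c hc ⟨f, hfI, hf0, hlead⟩
    exact hrem c hc f ⟨hfI, hf0⟩ (h.degree_eq_of_isLeadMon hf0 hlead).le
  · have hcomb : m.toSyn (m.degree (monomial w (1 : F) - r)) ≤ m.toSyn w := by
      rw [hsub, Finsupp.linearCombination_apply]
      refine m.degree_sum_le.trans (Finset.sup_le fun b _ => ?_)
      dsimp only
      rw [smul_eq_mul, mul_comm]
      exact (hdeg b).trans hw
    calc m.toSyn u ≤ m.toSyn (m.degree r) := m.le_degree hu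
      _ ≤ m.toSyn w := by
        rw [← sub_sub_cancel (monomial w (1 : F)) r]
        exact m.degree_sub_le.trans (sup_le hw hcomb)

theorem stdMon_eq_of_subset (h : IsTermOrder lin) {lin' : LinearOrder (Mon n)}
    {I : Ideal (MvPolynomial (Fin n) F)} (hsub : stdMon lin I ⊆ stdMon lin' I) :
    stdMon lin I = stdMon lin' I := by
  refine hsub.antisymm fun w hw => ?_
  obtain ⟨r, hrI, hr, -⟩ := h.exists_monomial_sub_mem I w
  have hmon : ((monomial w (1 : F)).support : Set (Mon n)) ⊆ stdMon lin' I :=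
    (Finset.coe_subset.2 support_monomial_subset).trans (by simpa using hw)
  have hrw : monomial w 1 - r = 0 :=
    eq_zero_of_support_subset_stdMon lin' hrI (coe_support_sub_subset hmon (hr.trans hsub))
  apply hr
  simp [← sub_eq_zero.mp hrw]

end IsTermOrder

section LexInvariant

variable {F : Type*} [Field F] {I : Ideal (MvPolynomial (Fin n) F)} {D : Set (Mon n)}

theorem exists_monomial_sub_mem_le_of_lex (hD : ∀ σ, stdMon (lexOrder σ) I = D) {w : Mon n}
    (hw : w ∉ D) :
    ∃ r : MvPolynomial (Fin n) F, monomial w 1 - r ∈ I ∧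
      (r.support : Set (Mon n)) ⊆ D ∧ ∀ u ∈ r.support, u ≤ w := by
  have hnf σ := (isLexOrder_lexOrder σ).isTermOrder.exists_monomial_sub_mem I w
  obtain ⟨r, hrI, hrD, -⟩ := hnf 1
  rw [hD] at hrD
  refine ⟨r, hrI, hrD, fun u hu => le_of_forall_lexLt fun σ => ?_⟩
  obtain ⟨r', hr'I, hr'D, hr'w⟩ := hnf σ
  rw [hD] at hr'D
  have hrr' : r' - r = 0 := by
    refine eq_zero_of_support_subset_stdMon (I := I) (lexOrder 1) ?_ ?_
    · simpa using I.sub_mem hrI hr'I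
    · rw [hD]
      exact coe_support_sub_subset hr'D hrD
  rw [sub_eq_zero.mp hrr'] at hr'w
  have hne : u ≠ w := fun huw => hw (huw ▸ hrD hu)
  exact (isLexOrder_lexOrder σ u w).mp
    (@lt_of_le_of_ne _ (lexOrder σ).toPartialOrder _ _ (hr'w u hu) hne)

theorem stdMon_subset_of_lex (hD : ∀ σ, stdMon (lexOrder σ) I = D)
    {lin : LinearOrder (Mon n)} (h : IsTermOrder lin) : stdMon lin I ⊆ D := by
  intro w hw
  by_contra hwD
  obtain ⟨r, hrI, hrD, hrw⟩ := exists_monomial_sub_mem_le_of_lex hD hwD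
  have hwr : w ∉ r.support := fun hwr => hwD (hrD hwr)
  have hlead : w ∈ (monomial w 1 - r).support := by
    simp [coeff_monomial, notMem_support_iff.mp hwr]
  refine hw ⟨_, hrI, fun h0 => by simp [h0] at hlead, hlead, fun v hv => h.le_of_le ?_⟩
  rcases Finset.mem_union.mp (support_sub _ _ _ hv) with hv | hv
  · rw [Finset.mem_singleton.mp (support_monomial_subset hv)]
  · exact hrw v hv

theorem stdMon_eq_of_lex (hD : ∀ σ, stdMon (lexOrder σ) I = D)
    {lin : LinearOrder (Mon n)} (h : IsTermOrder lin) : stdMon lin I = D := by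
  have hsub := stdMon_subset_of_lex hD h
  rw [← hD 1] at hsub ⊢
  exact h.stdMon_eq_of_subset hsub

end LexInvariant

theorem stdMon_lex_invariant_iff_all_invariant_general {n : ℕ} {F : Type*} [Field F]
    (V : Finset (Fin n → F)) :
    (∀ (σ₁ σ₂ : Equiv.Perm (Fin n)) (lin₁ lin₂ : LinearOrder (Mon n)),
        IsLexOrder σ₁ lin₁ → IsLexOrder σ₂ lin₂ →
          stdMon lin₁ (vanishIdeal (V : Set (Fin n → F))) =
            stdMon lin₂ (vanishIdeal (V : Set (Fin n → F)))) ↔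
      (∀ lin₁ lin₂ : LinearOrder (Mon n), IsTermOrder lin₁ → IsTermOrder lin₂ →
        stdMon lin₁ (vanishIdeal (V : Set (Fin n → F))) =
          stdMon lin₂ (vanishIdeal (V : Set (Fin n → F)))) := by
  constructor
  · intro H lin₁ lin₂ h₁ h₂
    have hD σ := H σ 1 _ _ (isLexOrder_lexOrder σ) (isLexOrder_lexOrder 1)
    rw [stdMon_eq_of_lex hD h₁, stdMon_eq_of_lex hD h₂]
  · exact fun H σ₁ σ₂ lin₁ lin₂ h₁ h₂ => H lin₁ lin₂ h₁.isTermOrder h₂.isTermOrder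

/-- Proposition `lex<=>all term orders`.
For a finite point set `𝒱 ⊆ Aⁿ` with `A ⊆ 𝔽` finite, `Sm(I(𝒱))` is the same for every
lexicographic term order if and only if it is the same for every term order. -/
theorem stdMon_lex_invariant_iff_all_invariant {n : ℕ} {F : Type*} [Field F]
    (A : Finset F) (V : Finset (Fin n → F)) (hV : ∀ v ∈ V, ∀ i : Fin n, v i ∈ A) :
    (∀ (σ₁ σ₂ : Equiv.Perm (Fin n)) (lin₁ lin₂ : LinearOrder (Mon n)),
        IsLexOrder σ₁ lin₁ → IsLexOrder σ₂ lin₂ →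
          stdMon lin₁ (vanishIdeal (V : Set (Fin n → F))) =
            stdMon lin₂ (vanishIdeal (V : Set (Fin n → F)))) ↔
      (∀ lin₁ lin₂ : LinearOrder (Mon n), IsTermOrder lin₁ → IsTermOrder lin₂ →
        stdMon lin₁ (vanishIdeal (V : Set (Fin n → F))) =
          stdMon lin₂ (vanishIdeal (V : Set (Fin n → F)))) :=
  stdMon_lex_invariant_iff_all_invariant_general V
end

section
/- Let 𝔽 be a field and 𝒱 ⊆ 𝔽^n a finite point set, and suppose that the set of standard monomials of I(𝒱) is the same family 𝒮 for every lexicographic term order. Then for every monomial x^u ∉ 𝒮 there exists a polynomial f ∈ I(𝒱) of the form f = x^u + Σ_{x^v ∈ 𝒮} α_v x^v which is degree dominated with dominating term x^u; in particular every monomial of f other than x^u divides x^u, and lm(f) = x^u with respect to every term order. -/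
open MvPolynomial

/-!
Reduce `x^u` modulo `I(𝒱)` with respect to one lex order: well-founded induction on `u` gives
`f ∈ I(𝒱)` with coefficient `1` at `u` whose other monomials are standard and smaller. Since the
standard monomials are the same for every lex order, `x^u` is then the leading monomial of `f` for
every lex order, because a standard monomial is never a leading monomial. Putting `x_i` first in
the lex order shows `v_i ≤ u_i` for every monomial `x^v` of `f`, so `x^v ∣ x^u`, and divisibility
forces `x^v ⪯ x^u` in every term order.
-/

variable {n : ℕ}

noncomputable abbrev lexLin (σ : Equiv.Perm (Fin n)) : LinearOrder (Mon n) :=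
  LinearOrder.lift' (fun u => toLex (Finsupp.equivCongrLeft σ.symm u))
    (toLex.injective.comp (Finsupp.equivCongrLeft σ.symm).injective)

lemma isLexOrder_lexLin (σ : Equiv.Perm (Fin n)) : IsLexOrder σ (lexLin σ) := by
  intro u v
  change toLex (Finsupp.equivCongrLeft σ.symm u) < toLex (Finsupp.equivCongrLeft σ.symm v) ↔ _
  simp only [Finsupp.Lex.lt_iff, ofLex_toLex, Finsupp.equivCongrLeft_apply,
    Finsupp.equivMapDomain_apply, Equiv.symm_symm]
  exact exists_congr fun j => and_comm

lemma wellFounded_lexLin (σ : Equiv.Perm (Fin n)) : WellFounded (lexLin σ).lt :=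
  InvImage.wf (fun u : Mon n => toLex (Finsupp.equivCongrLeft σ.symm u))
    Finsupp.Lex.wellFoundedLT.wf

lemma le_of_forall_lexLin_le {u v : Mon n} (h : ∀ σ, (lexLin σ).le v u) : v ≤ u := by
  intro i
  by_contra! hlt
  set σ := Equiv.swap ⟨0, i.pos⟩ i
  have huv : (lexLin σ).lt u v := (isLexOrder_lexLin σ u v).2
    ⟨⟨0, i.pos⟩, by simpa [σ] using hlt, fun j hj => absurd (Fin.lt_def.mp hj) j.val.not_lt_zero⟩
  exact @not_le_of_gt _ (lexLin σ).toPreorder _ _ huv (h σ)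

lemma IsTermOrder.le_of_le_s7 {lin : LinearOrder (Mon n)} (hlin : IsTermOrder lin) {u v : Mon n}
    (h : v ≤ u) : lin.le v u := by
  simpa [tsub_add_cancel_of_le h] using hlin.2 0 (u - v) v (hlin.1 _)

section StandardMonomials

variable {F : Type*} {lin : LinearOrder (Mon n)}

lemma isLeadMon_of_forall_ne_mem_stdMon [CommSemiring F] {I : Ideal (MvPolynomial (Fin n) F)}
    {f : MvPolynomial (Fin n) F} {u : Mon n} (hfI : f ∈ I) (hu : u ∈ f.support)
    (hS : ∀ v ∈ f.support, v ≠ u → v ∈ stdMon lin I) : IsLeadMon lin f u := by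
  obtain ⟨m, hm, hmax⟩ := @Finset.exists_max_image _ _ lin f.support id ⟨u, hu⟩
  obtain rfl : m = u := by
    by_contra hmu
    exact hS m hm hmu ⟨f, hfI, support_nonempty.mp ⟨m, hm⟩, hm, hmax⟩
  exact ⟨hm, hmax⟩

lemma coeff_eq_ite_of_notMem_stdMon [CommSemiring F] {I : Ideal (MvPolynomial (Fin n) F)}
    {f : MvPolynomial (Fin n) F} {w x : Mon n} (hw : coeff w f = 1)
    (hS : ∀ v ∈ f.support, v ≠ w → v ∈ stdMon lin I) (hx : x ∉ stdMon lin I) :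
    coeff x f = if x = w then 1 else 0 := by
  split_ifs with hxw
  · rw [hxw, hw]
  · by_contra hne
    exact hx (hS x (mem_support_iff.mpr hne) hxw)

variable [Field F] {I : Ideal (MvPolynomial (Fin n) F)}

lemma exists_coeff_eq_one_of_notMem_stdMon {u : Mon n} (hu : u ∉ stdMon lin I) :
    ∃ g ∈ I, coeff u g = 1 ∧ ∀ v ∈ g.support, lin.le v u := by
  obtain ⟨g, hgI, -, hgu, hmax⟩ := not_not.mp hu
  refine ⟨(coeff u g)⁻¹ • g, I.smul_of_tower_mem _ hgI, ?_, fun v hv => hmax v ?_⟩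
  · rw [coeff_smul, smul_eq_mul, inv_mul_cancel₀ (mem_support_iff.mp hgu)]
  · exact support_smul hv

theorem exists_standard_representation (hwf : WellFounded lin.lt) {u : Mon n}
    (hu : u ∉ stdMon lin I) :
    ∃ f ∈ I, coeff u f = 1 ∧ ∀ v ∈ f.support, v ≠ u → v ∈ stdMon lin I ∧ lin.lt v u := by
  classical
  induction u using hwf.induction with
  | _ u IH =>
  obtain ⟨g, hgI, hgu, hg_le⟩ := exists_coeff_eq_one_of_notMem_stdMon hu
  -- Every non-standard monomial `w` of `g` below `u` is cancelled by its own representation `r w`.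
  set T := g.support.filter fun v => lin.lt v u ∧ v ∉ stdMon lin I
  have hwu : ∀ w ∈ T, lin.lt w u := fun w hw => (Finset.mem_filter.1 hw).2.1
  choose! r hrI hr_one hr_std using
    fun w (hw : w ∈ T) => IH w (hwu w hw) (Finset.mem_filter.1 hw).2.2
  have hr_lt : ∀ w ∈ T, ∀ x ∈ (r w).support, lin.lt x u := fun w hw x hx => by
    obtain rfl | hxw := eq_or_ne x w
    · exact hwu x hw
    · exact @lt_trans _ lin.toPreorder _ _ _ (hr_std w hw x hx hxw).2 (hwu w hw)
  set f := g - ∑ w ∈ T, coeff w g • r w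
  have hcoeff : ∀ x, coeff x f = coeff x g - ∑ w ∈ T, coeff w g * coeff x (r w) := by
    simp [f, coeff_sum, coeff_smul]
  refine ⟨f, sub_mem hgI (sum_mem fun w hw => I.smul_of_tower_mem _ (hrI w hw)), ?_,
    fun v hv hvu => ⟨?_, ?_⟩⟩
  · have hru : ∑ w ∈ T, coeff w g * coeff u (r w) = 0 := Finset.sum_eq_zero fun w hw => by
      rw [notMem_support_iff.mp fun hu' => @lt_irrefl _ lin.toPreorder u (hr_lt w hw u hu'),
        mul_zero]
    rw [hcoeff, hru, hgu, sub_zero]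
  · by_contra hv_std
    have hsum : ∑ w ∈ T, coeff w g * coeff v (r w) = if v ∈ T then coeff v g else 0 := by
      rw [← Finset.sum_ite_eq T v fun w => coeff w g]
      refine Finset.sum_congr rfl fun w hw => ?_
      rw [coeff_eq_ite_of_notMem_stdMon (hr_one w hw)
        (fun x hx hxw => (hr_std w hw x hx hxw).1) hv_std, mul_ite, mul_one, mul_zero]
    refine mem_support_iff.mp hv ?_
    rw [hcoeff, hsum]
    split_ifs with hvT
    · exact sub_self _
    · rw [sub_zero]
      by_contra hgv
      exact hvT (Finset.mem_filter.2 ⟨mem_support_iff.mpr hgv,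
        @lt_of_le_of_ne _ lin.toPartialOrder _ _ (hg_le v (mem_support_iff.mpr hgv)) hvu, hv_std⟩)
  · have hv' := mem_support_iff.mp hv
    rw [hcoeff] at hv'
    by_cases hgv : coeff v g = 0
    · rw [hgv, zero_sub, neg_ne_zero] at hv'
      obtain ⟨w, hw, hne⟩ := Finset.exists_ne_zero_of_sum_ne_zero hv'
      exact hr_lt w hw v (mem_support_iff.mpr (right_ne_zero_of_mul hne))
    · exact @lt_of_le_of_ne _ lin.toPartialOrder _ _ (hg_le v (mem_support_iff.mpr hgv)) hvu

end StandardMonomials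

/-- If the standard monomials of `I(𝒱)` are the same family `𝒮` for every lex order, then
every monomial `x^u ∉ 𝒮` admits a polynomial `f = x^u + Σ_{x^v ∈ 𝒮} α_v x^v ∈ I(𝒱)`
which is degree dominated with dominating term `x^u`; in particular every monomial of
`f` divides `x^u` and `lm(f) = x^u` for every term order. -/
theorem exists_degDominated_standard_representation {n : ℕ} {F : Type*} [Field F]
    (V : Finset (Fin n → F)) (S : Set (Mon n))
    (hS : ∀ (σ : Equiv.Perm (Fin n)) (lin : LinearOrder (Mon n)), IsLexOrder σ lin →
      stdMon lin (vanishIdeal (V : Set (Fin n → F))) = S)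
    (u : Mon n) (hu : u ∉ S) :
    ∃ f ∈ vanishIdeal (V : Set (Fin n → F)),
      MvPolynomial.coeff u f = 1 ∧
      (∀ v ∈ f.support, v ≠ u → v ∈ S) ∧
      (∀ v ∈ f.support, v ≤ u) ∧
      (∀ lin : LinearOrder (Mon n), IsTermOrder lin → IsLeadMon lin f u) := by
  have hS_lex : ∀ σ, stdMon (lexLin σ) (vanishIdeal (V : Set (Fin n → F))) = S :=
    fun σ => hS σ _ (isLexOrder_lexLin σ)
  obtain ⟨f, hfI, hfu, hf_std⟩ :=
    exists_standard_representation (wellFounded_lexLin 1) ((hS_lex 1).symm ▸ hu)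
  have hf_S : ∀ v ∈ f.support, v ≠ u → v ∈ S := fun v hv hvu => hS_lex 1 ▸ (hf_std v hv hvu).1
  have hu_mem : u ∈ f.support := by simp [mem_support_iff, hfu]
  have hf_lead : ∀ σ, IsLeadMon (lexLin σ) f u := fun σ =>
    isLeadMon_of_forall_ne_mem_stdMon hfI hu_mem fun w hw hwu => (hS_lex σ).symm ▸ hf_S w hw hwu
  have hf_le : ∀ v ∈ f.support, v ≤ u := fun v hv =>
    le_of_forall_lexLin_le fun σ => (hf_lead σ).2 v hv
  exact ⟨f, hfI, hfu, hf_S, hf_le, fun lin hlin => ⟨hu_mem, fun v hv => hlin.le_of_le_s7 (hf_le v hv)⟩⟩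
end

section
/- Let 𝓕 ⊆ 2^[n] be a set system, 𝔽 a field, and ≺ the lexicographic term order with x_{i_1} ≻ x_{i_2} ≻ ⋯ ≻ x_{i_n}. Then, identifying squarefree monomials with subsets of [n], Sm(I(𝓕)) = D_{i_n, i_{n−1}, …, i_1}(𝓕). -/
open MvPolynomial

/-!
Standard monomials of `I(𝓕)` are squarefree, because `x^m - x^{m - e_k}` vanishes on
`0/1`-vectors whenever `m_k ≥ 2`. If `M ∉ D(𝓕)`, a polynomial `f ∈ I(𝓕)` with lex-leading
monomial `x_M` is built by induction along the variable order. For the most significant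
variable `x_i`, let `𝓕₀` be the sets of `𝓕` avoiding `i` and `𝓕₁` those containing `i`, with
`i` removed. Then `D_i(𝓕)` splits in the same way into `𝓕₁ ∪ 𝓕₀` and `𝓕₁ ∩ 𝓕₀`, and the
later downshifts commute with this splitting. If `i ∉ M`, a polynomial in the later variables
for `𝓕₁ ∪ 𝓕₀` already vanishes on `𝓕`; if `i ∈ M`, take `x_i g + h` with `g` a polynomial for
`𝓕₁ ∩ 𝓕₀` and `h` an interpolant in the later variables that corrects the values on `𝓕`.
Hence `Sm(I(𝓕)) ⊆ D(𝓕)`. Equality follows by counting: downshifts preserve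
cardinality, and reduction by leading terms shows that the standard monomials span all
functions on `𝓕`, so there are at least `|𝓕|` of them.
-/

open Finset
open scoped FinsetFamily

section Downshift

variable {n : ℕ} {𝓖 : Finset (Finset (Fin n))} {i j : Fin n} {L : List (Fin n)}

lemma dshiftSet_eq_compression (𝓖 : Finset (Finset (Fin n))) (i : Fin n) :
    dshiftSet 𝓖 i = 𝓓 i 𝓖 := by
  ext G
  simp only [dshiftSet, mem_union, mem_image, mem_filter, Down.mem_compression]
  by_cases hiG : i ∈ G
  · have hne : ∀ H : Finset (Fin n), H.erase i ≠ G := fun H h => by simp [← h] at hiG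
    simp [hiG, hne]
  · constructor
    · rintro (⟨H, hH, rfl⟩ | ⟨-, hiG', -⟩)
      · by_cases hG : H.erase i ∈ 𝓖
        · exact .inl ⟨hG, by rwa [erase_idem]⟩
        · refine .inr ⟨hG, ?_⟩
          by_cases hiH : i ∈ H
          · rwa [insert_erase hiH]
          · rw [erase_eq_of_notMem hiH] at hG
            exact absurd hH hG
      · exact absurd hiG' hiG
    · rintro (⟨hG, -⟩ | ⟨-, hG⟩)
      · exact .inl ⟨G, hG, erase_eq_of_notMem hiG⟩
      · exact .inl ⟨_, hG, erase_insert hiG⟩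

lemma nonMemberSubfamily_compression_self :
    (𝓓 i 𝓖).nonMemberSubfamily i = 𝓖.memberSubfamily i ∪ 𝓖.nonMemberSubfamily i := by
  ext G
  by_cases hiG : i ∈ G
  · simp [hiG]
  · simp only [mem_nonMemberSubfamily, mem_union, mem_memberSubfamily, Down.mem_compression,
      hiG, erase_eq_of_notMem, not_false_eq_true, and_true]
    tauto

lemma memberSubfamily_compression_self :
    (𝓓 i 𝓖).memberSubfamily i = 𝓖.memberSubfamily i ∩ 𝓖.nonMemberSubfamily i := by
  ext G
  by_cases hiG : i ∈ G
  · simp [hiG]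
  · simp only [mem_memberSubfamily, mem_inter, mem_nonMemberSubfamily, Down.mem_compression,
      erase_insert hiG, insert_idem, hiG, not_false_eq_true, and_true]
    tauto

lemma nonMemberSubfamily_compression_of_ne (hij : i ≠ j) :
    (𝓓 j 𝓖).nonMemberSubfamily i = 𝓓 j (𝓖.nonMemberSubfamily i) := by
  ext G
  simp only [mem_nonMemberSubfamily, Down.mem_compression, mem_erase, mem_insert, hij, false_or,
    ne_eq, not_false_eq_true, true_and]
  tauto

lemma memberSubfamily_compression_of_ne (hij : i ≠ j) :
    (𝓓 j 𝓖).memberSubfamily i = 𝓓 j (𝓖.memberSubfamily i) := by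
  ext G
  simp only [mem_memberSubfamily, Down.mem_compression, erase_insert_of_ne hij, insert_comm j i,
    mem_erase, mem_insert, hij, false_or, ne_eq, not_false_eq_true, true_and]
  tauto

lemma foldl_dshiftSet_comm (Φ : Finset (Finset (Fin n)) → Finset (Finset (Fin n)))
    (hΦ : ∀ j ∈ L, ∀ 𝓖, Φ (dshiftSet 𝓖 j) = dshiftSet (Φ 𝓖) j)
    (𝓖 : Finset (Finset (Fin n))) : Φ (L.foldl dshiftSet 𝓖) = L.foldl dshiftSet (Φ 𝓖) := by
  induction L generalizing 𝓖 with
  | nil => rfl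
  | cons j t ih =>
    rw [List.foldl_cons, List.foldl_cons, ih (fun k hk => hΦ k (.tail j hk)),
      hΦ j List.mem_cons_self]

lemma memberSubfamily_foldl_dshiftSet (hi : i ∉ L) (𝓖 : Finset (Finset (Fin n))) :
    (L.foldl dshiftSet 𝓖).memberSubfamily i = L.foldl dshiftSet (𝓖.memberSubfamily i) :=
  foldl_dshiftSet_comm _ (fun j hj 𝓖 => by
    rw [dshiftSet_eq_compression, dshiftSet_eq_compression,
      memberSubfamily_compression_of_ne (fun h : i = j => hi (h ▸ hj))]) 𝓖

lemma nonMemberSubfamily_foldl_dshiftSet (hi : i ∉ L) (𝓖 : Finset (Finset (Fin n))) :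
    (L.foldl dshiftSet 𝓖).nonMemberSubfamily i = L.foldl dshiftSet (𝓖.nonMemberSubfamily i) :=
  foldl_dshiftSet_comm _ (fun j hj 𝓖 => by
    rw [dshiftSet_eq_compression, dshiftSet_eq_compression,
      nonMemberSubfamily_compression_of_ne (fun h : i = j => hi (h ▸ hj))]) 𝓖

lemma erase_notMem_foldl_memberSubfamily_inter (hi : i ∉ L) {M : Finset (Fin n)} (hiM : i ∈ M)
    (hMD : M ∉ L.foldl dshiftSet (𝓓 i 𝓖)) :
    M.erase i ∉ L.foldl dshiftSet (𝓖.memberSubfamily i ∩ 𝓖.nonMemberSubfamily i) := by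
  rw [← memberSubfamily_compression_self, ← memberSubfamily_foldl_dshiftSet hi,
    mem_memberSubfamily, insert_erase hiM]
  exact fun h => hMD h.1

lemma notMem_foldl_memberSubfamily_union (hi : i ∉ L) {M : Finset (Fin n)}
    (hMD : M ∉ L.foldl dshiftSet (𝓓 i 𝓖)) :
    M ∉ L.foldl dshiftSet (𝓖.memberSubfamily i ∪ 𝓖.nonMemberSubfamily i) := by
  rw [← nonMemberSubfamily_compression_self, ← nonMemberSubfamily_foldl_dshiftSet hi,
    mem_nonMemberSubfamily]
  exact fun h => hMD h.1

lemma card_foldl_dshiftSet (L : List (Fin n)) (𝓖 : Finset (Finset (Fin n))) :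
    #(L.foldl dshiftSet 𝓖) = #𝓖 := by
  induction L generalizing 𝓖 with
  | nil => rfl
  | cons j t ih => rw [List.foldl_cons, ih, dshiftSet_eq_compression, Down.card_compression]

lemma subset_of_mem_memberSubfamily_union {t : Finset (Fin n)} (h𝓖 : ∀ G ∈ 𝓖, G ⊆ insert i t)
    {G : Finset (Fin n)} (hG : G ∈ 𝓖.memberSubfamily i ∪ 𝓖.nonMemberSubfamily i) : G ⊆ t := by
  rcases mem_union.1 hG with hG | hG
  · obtain ⟨hG, hiG⟩ := mem_memberSubfamily.1 hG
    exact (subset_insert_iff_of_notMem hiG).1 ((subset_insert i G).trans (h𝓖 _ hG))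
  · obtain ⟨hG, hiG⟩ := mem_nonMemberSubfamily.1 hG
    exact (subset_insert_iff_of_notMem hiG).1 (h𝓖 _ hG)

end Downshift

section Monomials

variable {n : ℕ} {σ : Equiv.Perm (Fin n)} {i : Fin n}

lemma setMon_apply (S : Finset (Fin n)) (k : Fin n) :
    setMon S k = if k ∈ S then 1 else 0 := rfl

lemma setMon_empty : setMon (∅ : Finset (Fin n)) = 0 := by
  ext k
  simp [setMon_apply]

lemma setMon_insert {M : Finset (Fin n)} (hi : i ∉ M) :
    setMon (insert i M) = Finsupp.single i 1 + setMon M := by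
  ext k
  by_cases hk : i = k
  · subst hk
    simp [setMon_apply, hi]
  · simp [setMon_apply, Ne.symm hk]

lemma support_setMon (S : Finset (Fin n)) : (setMon S).support = S := by
  ext k
  simp [setMon_apply]

lemma setMon_injective : Function.Injective (setMon (n := n)) :=
  fun S T h => by rw [← support_setMon S, h, support_setMon]

lemma setMon_support_of_le_one {m : Mon n} (hm : ∀ k, m k ≤ 1) : setMon m.support = m := by
  ext k
  have := hm k
  simp only [setMon_apply, Finsupp.mem_support_iff]
  split_ifs <;> omega

lemma lexLt_wellFounded (σ : Equiv.Perm (Fin n)) : WellFounded (lexLt σ) := by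
  refine Subrelation.wf ?_ (InvImage.wf (fun (u : Mon n) (j : Fin n) => u (σ j))
    (Pi.Lex.wellFounded (· < ·) fun _ => Nat.lt_wfRel.wf))
  rintro u v ⟨j, hlt, heq⟩
  exact ⟨j, heq, hlt⟩

lemma IsLexOrder.wellFounded {lin : LinearOrder (Mon n)} (hlin : IsLexOrder σ lin) :
    WellFounded lin.lt :=
  Subrelation.wf (fun h => (hlin _ _).1 h) (lexLt_wellFounded σ)

lemma lexLt_add_right {u v : Mon n} (w : Mon n) (h : lexLt σ u v) :
    lexLt σ (u + w) (v + w) := by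
  obtain ⟨j, hlt, heq⟩ := h
  exact ⟨j, by simpa using hlt, fun i hi => by simp [heq i hi]⟩

lemma lexLt_tsub_single {m : Mon n} {k : Fin n} (hk : m k ≠ 0) :
    lexLt σ (m - Finsupp.single k 1) m := by
  refine ⟨σ.symm k, by simp; omega, fun i hi => ?_⟩
  have hik : σ i ≠ k := fun h => hi.ne (by simp [← h])
  simp [hik.symm]

lemma lexLt_single_add {t : Set (Fin n)} (hit : ∀ j ∈ t, σ.symm i < σ.symm j)
    {u w : Mon n} (hu : ↑u.support ⊆ t) (hw : ↑w.support ⊆ t) :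
    lexLt σ u (Finsupp.single i 1 + w) := by
  have hvanish : ∀ {v : Mon n} {k : Fin n}, ↑v.support ⊆ t → σ.symm k ≤ σ.symm i → v k = 0 :=
    fun hv hk => Finsupp.notMem_support_iff.1 fun h => (hit _ (hv h)).not_ge hk
  refine ⟨σ.symm i, by simp [hvanish hu le_rfl], fun l hl => ?_⟩
  have hl' : σ.symm (σ l) ≤ σ.symm i := by simpa using hl.le
  have hli : σ l ≠ i := fun h => hl.ne (by simp [← h])
  simp [hvanish hu hl', hvanish hw hl', hli.symm]

def IsLexLeadMon (σ : Equiv.Perm (Fin n)) {F : Type*} [CommSemiring F]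
    (f : MvPolynomial (Fin n) F) (m : Mon n) : Prop :=
  m ∈ f.support ∧ ∀ m' ∈ f.support, m' ≠ m → lexLt σ m' m

variable {F : Type*} [CommSemiring F] {lin : LinearOrder (Mon n)}

lemma IsLexLeadMon.isLeadMon (hlin : IsLexOrder σ lin) {f : MvPolynomial (Fin n) F}
    {m : Mon n} (h : IsLexLeadMon σ f m) : IsLeadMon lin f m := by
  refine ⟨h.1, fun m' hm' => ?_⟩
  by_cases hm'm : m' = m
  · exact hm'm ▸ lin.le_refl m'
  · exact @le_of_lt _ lin.toPreorder _ _ ((hlin m' m).2 (h.2 m' hm' hm'm))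

lemma notMem_stdMon_of_isLexLeadMon (hlin : IsLexOrder σ lin)
    {I : Ideal (MvPolynomial (Fin n) F)} {f : MvPolynomial (Fin n) F} (hf : f ∈ I) {m : Mon n}
    (h : IsLexLeadMon σ f m) : m ∉ stdMon lin I :=
  fun hm => hm ⟨f, hf, ne_zero_iff.2 ⟨m, mem_support_iff.1 h.1⟩, h.isLeadMon hlin⟩

end Monomials

lemma restrictSupport_stdMon_sup_eq_top {n : ℕ} {F : Type*} [Field F]
    {lin : LinearOrder (Mon n)} (hwf : WellFounded lin.lt) (I : Ideal (MvPolynomial (Fin n) F)) :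
    restrictSupport F (stdMon lin I) ⊔ I.restrictScalars F = ⊤ := by
  set P := restrictSupport F (stdMon lin I) ⊔ I.restrictScalars F
  rw [eq_top_iff, ← restrictSupport_univ, restrictSupport_eq_span, Submodule.span_le]
  rintro _ ⟨m, -, rfl⟩
  induction m using hwf.induction with
  | _ m ih =>
  by_cases hm : m ∈ stdMon lin I
  · exact Submodule.mem_sup_left (by simp [hm])
  obtain ⟨q, hqI, -, hqm, hqle⟩ := not_not.1 hm
  set c := coeff m q
  have hc : c ≠ 0 := mem_support_iff.1 hqm
  have hlower : monomial m 1 - C c⁻¹ * q ∈ restrictSupport F {m' | lin.lt m' m} := by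
    intro m' hm'
    have hcoeff : coeff m' (monomial m 1 - C c⁻¹ * q) ≠ 0 := mem_support_iff.1 hm'
    rw [coeff_sub, coeff_monomial, coeff_C_mul] at hcoeff
    by_cases hm'm : m = m'
    · subst hm'm
      rw [if_pos rfl, inv_mul_cancel₀ hc, sub_self] at hcoeff
      exact absurd rfl hcoeff
    · rw [if_neg hm'm, zero_sub, neg_ne_zero, mul_ne_zero_iff] at hcoeff
      exact @lt_of_le_of_ne _ lin.toPartialOrder _ _ (hqle m' (mem_support_iff.2 hcoeff.2))
        (Ne.symm hm'm)
  have hlowerP : restrictSupport F {m' | lin.lt m' m} ≤ P := by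
    rw [restrictSupport_eq_span, Submodule.span_le]
    rintro _ ⟨m', hm', rfl⟩
    exact ih m' hm'
  have hqP : C c⁻¹ * q ∈ P := Submodule.mem_sup_right (I.mul_mem_left _ hqI)
  simpa using P.add_mem (hlowerP hlower) hqP

section CharVec

variable {n : ℕ} {F : Type*} [Field F]

variable (F) in
lemma mem_vanishIdeal_charVec_image {𝓖 : Finset (Finset (Fin n))}
    {f : MvPolynomial (Fin n) F} :
    f ∈ vanishIdeal (charVec F '' 𝓖) ↔ ∀ G ∈ 𝓖, eval (charVec F G) f = 0 :=
  Set.forall_mem_image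

lemma eval_charVec_monomial (G : Finset (Fin n)) (m : Mon n) (c : F) :
    eval (charVec F G) (monomial m c) = c * ∏ k ∈ m.support, charVec F G k := by
  rw [eval_monomial, Finsupp.prod]
  congr 1
  refine prod_congr rfl fun k hk => ?_
  have hk : m k ≠ 0 := Finsupp.mem_support_iff.1 hk
  unfold charVec
  split_ifs <;> simp [hk]

lemma eval_charVec_erase_of_mem_supported {T : Set (Fin n)} {p : MvPolynomial (Fin n) F}
    (hp : p ∈ supported F T) {i : Fin n} (hi : i ∉ T) (G : Finset (Fin n)) :
    eval (charVec F (G.erase i)) p = eval (charVec F G) p := by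
  refine hom_congr_vars (by ext; simp) (fun k hk _ => ?_) rfl
  have hki : k ≠ i := fun h => hi (h ▸ mem_supported.1 hp hk)
  simp [charVec, hki]

lemma support_subset_of_mem_supported {T : Set (Fin n)} {p : MvPolynomial (Fin n) F}
    (hp : p ∈ supported F T) {m : Mon n} (hm : m ∈ p.support) : ↑m.support ⊆ T :=
  fun k hk => mem_supported.1 hp ((mem_vars_iff_mem_support k).2 ⟨m, hm, hk⟩)

variable (F) in
noncomputable def cubeIndicator (T G : Finset (Fin n)) : MvPolynomial (Fin n) F :=
  ∏ i ∈ T, if i ∈ G then X i else 1 - X i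

lemma cubeIndicator_mem_supported (T G : Finset (Fin n)) :
    cubeIndicator F T G ∈ supported F ↑T := by
  refine Subalgebra.prod_mem _ fun i hi => ?_
  have hX : X i ∈ supported F ↑T := X_mem_supported.2 hi
  split_ifs
  · exact hX
  · exact Subalgebra.sub_mem _ (Subalgebra.one_mem _) hX

lemma eval_charVec_cubeIndicator {T G H : Finset (Fin n)} (hG : G ⊆ T) (hH : H ⊆ T) :
    eval (charVec F H) (cubeIndicator F T G) = if G = H then 1 else 0 := by
  have hfactor : ∀ i, eval (charVec F H) (if i ∈ G then X i else 1 - X i) =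
      if (i ∈ G ↔ i ∈ H) then 1 else 0 := fun i => by
    by_cases hiG : i ∈ G <;> by_cases hiH : i ∈ H <;> simp [charVec, hiG, hiH]
  have hagree : (∀ i ∈ T, (i ∈ G ↔ i ∈ H)) ↔ G = H :=
    ⟨fun h => ext fun i => ⟨fun hi => (h i (hG hi)).1 hi, fun hi => (h i (hH hi)).2 hi⟩,
      fun h _ _ => h ▸ Iff.rfl⟩
  rw [cubeIndicator, map_prod, prod_congr rfl fun i _ => hfactor i, prod_boole]
  simp only [hagree]

lemma exists_mem_supported_eval_charVec_eq {T : Finset (Fin n)} (W : Finset (Finset (Fin n)))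
    (hW : ∀ G ∈ W, G ⊆ T) (φ : Finset (Fin n) → F) :
    ∃ h ∈ supported F ↑T, ∀ G ∈ W, eval (charVec F G) h = φ G := by
  refine ⟨∑ G ∈ W, C (φ G) * cubeIndicator F T G,
    Subalgebra.sum_mem _ fun G _ => Subalgebra.mul_mem _ (Subalgebra.algebraMap_mem _ _)
      (cubeIndicator_mem_supported T G), fun H hH => ?_⟩
  simp only [map_sum, map_mul, eval_C]
  rw [sum_congr rfl fun G hG => by rw [eval_charVec_cubeIndicator (hW G hG) (hW H hH)]]
  simp [hH]

lemma le_one_of_mem_stdMon {σ : Equiv.Perm (Fin n)} {lin : LinearOrder (Mon n)}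
    (hlin : IsLexOrder σ lin) {𝓖 : Finset (Finset (Fin n))} {m : Mon n}
    (hm : m ∈ stdMon lin (vanishIdeal (charVec F '' 𝓖))) (k : Fin n) : m k ≤ 1 := by
  by_contra! hk
  set m' := m - Finsupp.single k 1
  have hsupp : m'.support = m.support := by
    ext j
    simp only [Finsupp.mem_support_iff, m', Finsupp.tsub_apply, Finsupp.single_apply]
    split_ifs with hj
    · subst hj; omega
    · omega
  have hne : m ≠ m' := fun h => by
    have hmk := congrArg (· k) h
    simp only [m', Finsupp.tsub_apply, Finsupp.single_eq_same] at hmk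
    omega
  refine notMem_stdMon_of_isLexLeadMon hlin (f := monomial m 1 - monomial m' 1) ?_
    ⟨?_, fun u hu hum => ?_⟩ hm
  · refine (mem_vanishIdeal_charVec_image F).2 fun G _ => ?_
    rw [map_sub, eval_charVec_monomial, eval_charVec_monomial, hsupp, sub_self]
  · simp [coeff_monomial, hne.symm]
  · classical
    have hu' := support_sub _ _ _ hu
    simp only [mem_union, support_monomial, one_ne_zero, if_false, mem_singleton, hum,
      false_or] at hu'
    exact hu' ▸ lexLt_tsub_single (by omega)

lemma card_le_of_stdMon_subset {lin : LinearOrder (Mon n)} (hwf : WellFounded lin.lt)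
    (𝓖 : Finset (Finset (Fin n))) {S : Finset (Mon n)}
    (hS : stdMon lin (vanishIdeal (charVec F '' 𝓖)) ⊆ S) : #𝓖 ≤ #S := by
  classical
  set I := vanishIdeal (charVec F '' (𝓖 : Set (Finset (Fin n))))
  let E : MvPolynomial (Fin n) F →ₗ[F] (𝓖 → F) :=
    LinearMap.pi fun G => (aeval (charVec F G.1)).toLinearMap
  have hE : ∀ p G, E p G = eval (charVec F G.1) p := fun p G => by simp [E]
  have hsurj : Function.Surjective E := fun φ => by
    obtain ⟨p, -, hp⟩ := exists_mem_supported_eval_charVec_eq (T := univ) 𝓖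
      (fun G _ => subset_univ G) fun G => if hG : G ∈ 𝓖 then φ ⟨G, hG⟩ else 0
    exact ⟨p, funext fun G => by simp [hE, hp G.1 G.2]⟩
  have hI : I.restrictScalars F ≤ LinearMap.ker E := fun q hq => by
    ext G
    simpa [hE] using (mem_vanishIdeal_charVec_image F).1 hq G.1 G.2
  have hspan : Submodule.span F (S.image fun m => E (monomial m 1) : Set (𝓖 → F)) = ⊤ := by
    rw [coe_image, ← Set.image_image, ← Submodule.map_span, ← restrictSupport_eq_span,
      eq_top_iff, ← LinearMap.range_eq_top.2 hsurj, LinearMap.range_eq_map,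
      ← restrictSupport_stdMon_sup_eq_top hwf I, Submodule.map_sup,
      LinearMap.le_ker_iff_map.1 hI, sup_bot_eq]
    exact Submodule.map_mono (restrictSupport_mono F hS)
  calc #𝓖 = Module.finrank F (𝓖 → F) := by simp
    _ = Module.finrank F (Submodule.span F
          (S.image fun m => E (monomial m 1) : Set (𝓖 → F))) := by rw [hspan, finrank_top]
    _ ≤ #(S.image fun m => E (monomial m 1)) := finrank_span_finset_le_card _
    _ ≤ #S := card_image_le

end CharVec

section Construction

variable {n : ℕ} {F : Type*} [Field F] {σ : Equiv.Perm (Fin n)}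
  {𝓖 : Finset (Finset (Fin n))} {i : Fin n} {t : Finset (Fin n)}

lemma mem_vanishIdeal_of_memberSubfamily_union {f : MvPolynomial (Fin n) F}
    (hf : f ∈ supported F ↑t) (hi : i ∉ t)
    (hvan : f ∈ vanishIdeal (charVec F '' ↑(𝓖.memberSubfamily i ∪ 𝓖.nonMemberSubfamily i))) :
    f ∈ vanishIdeal (charVec F '' ↑𝓖) := by
  rw [mem_vanishIdeal_charVec_image] at hvan ⊢
  intro G hG
  rw [← eval_charVec_erase_of_mem_supported hf (by exact_mod_cast hi)]
  exact hvan _ (memberSubfamily_union_nonMemberSubfamily i 𝓖 ▸ mem_image_of_mem _ hG)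

lemma exists_X_mul_add_mem_vanishIdeal (h𝓖 : ∀ G ∈ 𝓖, G ⊆ insert i t) (hi : i ∉ t)
    {f : MvPolynomial (Fin n) F} (hf : f ∈ supported F ↑t)
    (hvan : f ∈ vanishIdeal (charVec F '' ↑(𝓖.memberSubfamily i ∩ 𝓖.nonMemberSubfamily i))) :
    ∃ h ∈ supported F ↑t, X i * f + h ∈ vanishIdeal (charVec F '' ↑𝓖) := by
  -- `h` is `-f` on the sets through `i` (with `i` removed) and `0` on the others; the two
  -- prescriptions agree on the overlap because `f` vanishes there.
  obtain ⟨h, hh, hinterp⟩ := exists_mem_supported_eval_charVec_eq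
    (𝓖.memberSubfamily i ∪ 𝓖.nonMemberSubfamily i)
    (fun G hG => subset_of_mem_memberSubfamily_union h𝓖 hG)
    fun G => if G ∈ 𝓖.nonMemberSubfamily i then 0 else -eval (charVec F G) f
  have hti : i ∉ (↑t : Set (Fin n)) := by exact_mod_cast hi
  refine ⟨h, hh, (mem_vanishIdeal_charVec_image F).2 fun G hG => ?_⟩
  rw [mem_vanishIdeal_charVec_image] at hvan
  simp only [map_add, map_mul, eval_X]
  by_cases hiG : i ∈ G
  · have hG' : G.erase i ∈ 𝓖.memberSubfamily i :=
      mem_memberSubfamily.2 ⟨by rwa [insert_erase hiG], notMem_erase i G⟩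
    rw [← eval_charVec_erase_of_mem_supported hf hti,
      ← eval_charVec_erase_of_mem_supported hh hti, hinterp _ (mem_union_left _ hG')]
    split_ifs with hG''
    · simp [hvan _ (mem_inter.2 ⟨hG', hG''⟩)]
    · simp [charVec, hiG]
  · have hG' : G ∈ 𝓖.nonMemberSubfamily i := mem_nonMemberSubfamily.2 ⟨hG, hiG⟩
    simp [hinterp _ (mem_union_right _ hG'), hG', charVec, hiG]

lemma IsLexLeadMon.X_mul_add {f h : MvPolynomial (Fin n) F} {m : Mon n}
    (hlead : IsLexLeadMon σ f m) (hit : ∀ j ∈ t, σ.symm i < σ.symm j)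
    (hf : f ∈ supported F ↑t) (hh : h ∈ supported F ↑t) :
    IsLexLeadMon σ (X i * f + h) (Finsupp.single i 1 + m) := by
  have hi : i ∉ (↑t : Set (Fin n)) := fun hi => (hit i hi).false
  have hm := support_subset_of_mem_supported hf hlead.1
  have hcoeff : coeff (Finsupp.single i 1 + m) h = 0 :=
    notMem_support_iff.1 fun hmem => hi (support_subset_of_mem_supported hh hmem (by simp))
  refine ⟨?_, fun u hu hum => ?_⟩
  · rw [mem_support_iff, coeff_add, coeff_X_mul, hcoeff, add_zero]
    exact mem_support_iff.1 hlead.1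
  rcases mem_union.1 (support_add hu) with hu | hu
  · rw [support_X_mul] at hu
    obtain ⟨v, hv, rfl⟩ := mem_map.1 hu
    have hvm : v ≠ m := fun h => hum (by simp [h])
    simpa [add_comm] using lexLt_add_right (Finsupp.single i 1) (hlead.2 v hv hvm)
  · exact lexLt_single_add (t := ↑t) (by simpa using hit) (support_subset_of_mem_supported hh hu)
      hm

variable (F) in
lemma exists_mem_vanishIdeal_isLexLeadMon {L : List (Fin n)}
    (hL : L.Pairwise (σ.symm · < σ.symm ·)) (h𝓖 : ∀ G ∈ 𝓖, G ⊆ L.toFinset)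
    {M : Finset (Fin n)} (hM : M ⊆ L.toFinset) (hMD : M ∉ L.foldl dshiftSet 𝓖) :
    ∃ f ∈ supported F ↑L.toFinset,
      f ∈ vanishIdeal (charVec F '' ↑𝓖) ∧ IsLexLeadMon σ f (setMon M) := by
  induction L generalizing 𝓖 M with
  | nil =>
    simp only [List.toFinset_nil, subset_empty] at h𝓖 hM
    subst hM
    refine ⟨1, Subalgebra.one_mem _, (mem_vanishIdeal_charVec_image F).2 fun G hG =>
      absurd (h𝓖 G hG ▸ hG) hMD, ?_⟩
    simp [IsLexLeadMon, setMon_empty]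
  | cons i t ih =>
    obtain ⟨hit, ht⟩ := List.pairwise_cons.1 hL
    have hit' : ∀ j ∈ t.toFinset, σ.symm i < σ.symm j := by simpa using hit
    have hi : i ∉ t := fun h => (hit i h).false
    rw [List.toFinset_cons] at h𝓖 hM ⊢
    rw [List.foldl_cons, dshiftSet_eq_compression] at hMD
    have hsub : ∀ G ∈ 𝓖.memberSubfamily i ∪ 𝓖.nonMemberSubfamily i, G ⊆ t.toFinset :=
      fun G hG => subset_of_mem_memberSubfamily_union h𝓖 hG
    have hsupp : supported F (t.toFinset : Set (Fin n)) ≤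
        supported F (insert i t.toFinset : Finset (Fin n)) :=
      supported_mono (coe_subset.2 (subset_insert _ _))
    by_cases hiM : i ∈ M
    · have hM' : M.erase i ⊆ t.toFinset :=
        (erase_subset_erase i hM).trans (erase_insert_subset i _)
      obtain ⟨f, hf, hvan, hlead⟩ := ih ht (fun G hG => hsub G (inter_subset_union hG)) hM'
        (erase_notMem_foldl_memberSubfamily_inter hi hiM hMD)
      obtain ⟨h, hh, hvan'⟩ := exists_X_mul_add_mem_vanishIdeal h𝓖 (by simpa using hi) hf hvan
      refine ⟨X i * f + h, Subalgebra.add_mem _ (Subalgebra.mul_mem _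
        (X_mem_supported.2 (by simp)) (hsupp hf)) (hsupp hh), hvan', ?_⟩
      rw [← insert_erase hiM, setMon_insert (notMem_erase i M)]
      exact hlead.X_mul_add hit' hf hh
    · have hM' : M ⊆ t.toFinset := (subset_insert_iff_of_notMem hiM).1 hM
      obtain ⟨f, hf, hvan, hlead⟩ :=
        ih ht hsub hM' (notMem_foldl_memberSubfamily_union hi hMD)
      exact ⟨f, hsupp hf,
        mem_vanishIdeal_of_memberSubfamily_union hf (by simpa using hi) hvan, hlead⟩

lemma stdMon_subset_image_iterDshiftSet {lin : LinearOrder (Mon n)} (hlin : IsLexOrder σ lin)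
    (𝓕 : Finset (Finset (Fin n))) :
    stdMon lin (vanishIdeal (charVec F '' ↑𝓕)) ⊆ setMon '' ↑(iterDshiftSet σ 𝓕) := by
  intro m hm
  have hm' : setMon m.support = m := setMon_support_of_le_one (le_one_of_mem_stdMon hlin hm)
  refine ⟨m.support, ?_, hm'⟩
  by_contra hD
  have hL : (List.ofFn fun j => σ j).toFinset = univ := by
    ext k
    simpa using ⟨σ.symm k, by simp⟩
  obtain ⟨f, -, hf, hlead⟩ := exists_mem_vanishIdeal_isLexLeadMon F (σ := σ)
    (List.pairwise_ofFn.2 fun a b hab => by simpa using hab)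
    (fun G _ => hL ▸ subset_univ G) (hL ▸ subset_univ _) hD
  exact notMem_stdMon_of_isLexLeadMon hlin hf (hm' ▸ hlead) hm

end Construction

open scoped Classical in
/-- Proposition `Smdownshift`.
For a set system `𝓕 ⊆ 2^[n]` and the lex order induced by
`x_{σ 0} ≻ x_{σ 1} ≻ ⋯ ≻ x_{σ(n-1)}`, identifying squarefree monomials with subsets of
`[n]`, `Sm(I(𝓕)) = D_{σ(n-1),…,σ 0}(𝓕)`. -/
theorem stdMon_eq_iterated_downshift_setSystem {n : ℕ} {F : Type*} [Field F]
    (𝓕 : Finset (Finset (Fin n))) (σ : Equiv.Perm (Fin n))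
    (lin : LinearOrder (Mon n)) (hlin : IsLexOrder σ lin) :
    stdMon lin (vanishIdeal ((𝓕.image (charVec F) : Finset (Fin n → F)) :
        Set (Fin n → F)))
      = (((iterDshiftSet σ 𝓕).image setMon : Finset (Mon n)) : Set (Mon n)) := by
  set T := (iterDshiftSet σ 𝓕).image setMon
  have hsub : stdMon lin (vanishIdeal (charVec F '' ↑𝓕)) ⊆ ↑T := by
    simpa [T] using stdMon_subset_image_iterDshiftSet hlin 𝓕
  rw [coe_image]
  refine hsub.antisymm fun m hmT => by_contra fun hm => ?_
  have hcard : #𝓕 ≤ #(T.erase m) := card_le_of_stdMon_subset hlin.wellFounded 𝓕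
    fun m' hm' => mem_erase.2 ⟨ne_of_mem_of_not_mem hm' hm, hsub hm'⟩
  have hT : #T = #𝓕 := by
    rw [card_image_of_injective _ setMon_injective]
    exact card_foldl_dshiftSet _ 𝓕
  have hT_pos : 0 < #T := card_pos.2 ⟨m, hmT⟩
  rw [card_erase_of_mem hmT] at hcard
  omega
end
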